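/- arXiv:1206.2955 — 2 statements merged into one kernel-verified Lean document; each statement's English description precedes it below -/
import Mathlib

section
/- Let n ≥ 2, t ≥ 2, and let Bad be a collection of 'bad' trapezoids, each defined by at most 4 curves out of n curves, with at most 20t trapezoids defined by any fixed set of at most 4 curves, and each bad trapezoid Δ satisfying |I(Δ)| ≥ n/2. If each curve is sampled independently with probability p = r/n, and X counts the bad trapezoids Δ such that all curves of D(Δ) are sampled and no curve of I(Δ) is sampled (where |D(Δ)| ≤ 4), then E[X] ≤ 80·t·r⁴·e^{−r/2}. -/
/-! Group the bad trapezoids by their number `i ∈ [1, 4]` of defining curves. There are at most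
`20t·C(n,i)` of them, each appearing with probability at most `p^i (1-p)^{n/2} ≤ p^i e^{-r/2}`, and
`C(n,i) p^i ≤ (np)^i = r^i ≤ r^4`; summing over the four values of `i` gives `80 t r^4 e^{-r/2}`. -/

open Finset Real

theorem one_sub_pow_le_exp_neg_mul {p : ℝ} (hp : p ≤ 1) (k : ℕ) :
    (1 - p) ^ k ≤ exp (-(p * k)) :=
  calc (1 - p) ^ k ≤ exp (-p) ^ k := pow_le_pow_left₀ (sub_nonneg.2 hp) (one_sub_le_exp_neg p) k
    _ = exp (-(p * k)) := by rw [← exp_nat_mul]; ring_nf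

theorem Nat.choose_mul_div_pow_le_pow (n i : ℕ) {r : ℝ} (hr : 0 ≤ r) :
    n.choose i * (r / n) ^ i ≤ r ^ i := by
  rcases Nat.eq_zero_or_pos n with rfl | hn
  · rcases i with _ | i <;> simp [pow_nonneg hr]
  · calc (n.choose i : ℝ) * (r / n) ^ i ≤ (n : ℝ) ^ i * (r / n) ^ i := by
          gcongr; exact_mod_cast n.choose_le_pow i
      _ = r ^ i := by rw [← mul_pow, mul_div_cancel₀ _ (by positivity)]

theorem Finset.sum_comp_eq_sum_card_fiber_mul {ι κ : Type*} [DecidableEq κ] {s : Finset ι}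
    {t : Finset κ} {g : ι → κ} (h : ∀ a ∈ s, g a ∈ t) (f : κ → ℝ) :
    ∑ a ∈ s, f (g a) = ∑ b ∈ t, #{a ∈ s | g a = b} * f b := by
  simp_rw [← sum_fiberwise_of_maps_to' h, sum_const, nsmul_eq_mul]

section SetSystem

variable {α β : Type*} [Fintype α] [Fintype β] [DecidableEq β] (D : α → Finset β) (M : ℕ)

theorem card_filter_card_eq_le_mul_choose (hfiber : ∀ s, #{a | D a = s} ≤ M) (i : ℕ) :
    #{a | #(D a) = i} ≤ M * (Fintype.card β).choose i :=
  calc #{a | #(D a) = i} ≤ M * #(({a | #(D a) = i} : Finset α).image D) :=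
        card_le_mul_card_image _ M fun s _ =>
          (card_le_card (monotone_filter_left _ (subset_univ _))).trans (hfiber s)
    _ ≤ M * #(univ.powersetCard i) := by
        gcongr
        intro s hs
        obtain ⟨a, ha, rfl⟩ := mem_image.1 hs
        simpa using (mem_filter.1 ha).2
    _ = M * (Fintype.card β).choose i := by rw [card_powersetCard, card_univ]

theorem sum_div_pow_card_le (hfiber : ∀ s, #{a | D a = s} ≤ M) {k : ℕ}
    (hD1 : ∀ a, 1 ≤ #(D a)) (hDk : ∀ a, #(D a) ≤ k) {r : ℝ} (hr : 1 ≤ r) :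
    ∑ a, (r / Fintype.card β) ^ #(D a) ≤ M * k * r ^ k := by
  set N := Fintype.card β
  calc ∑ a, (r / N) ^ #(D a) = ∑ i ∈ Icc 1 k, #{a | #(D a) = i} * (r / N) ^ i :=
        sum_comp_eq_sum_card_fiber_mul (fun a _ => mem_Icc.2 ⟨hD1 a, hDk a⟩) _
    _ ≤ ∑ i ∈ Icc 1 k, (M * N.choose i : ℝ) * (r / N) ^ i := by
        gcongr with i
        exact_mod_cast card_filter_card_eq_le_mul_choose D M hfiber i
    _ ≤ ∑ i ∈ Icc 1 k, M * r ^ k := by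
        refine sum_le_sum fun i hi => ?_
        rw [mul_assoc]
        gcongr
        exact (N.choose_mul_div_pow_le_pow i (by linarith)).trans
          (pow_le_pow_right₀ hr (mem_Icc.1 hi).2)
    _ = M * k * r ^ k := by rw [sum_const, Nat.card_Icc, nsmul_eq_mul]; push_cast; ring

end SetSystem

theorem stmt_4_general (n t : ℕ) (r : ℝ) (hr : 1 ≤ r) (hrn : r ≤ n)
    (Bad : Type) [Fintype Bad]
    (D : Bad → Finset (Fin n)) (I : Bad → ℕ)
    (hD1 : ∀ Δ, 1 ≤ (D Δ).card) (hD4 : ∀ Δ, (D Δ).card ≤ 4)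
    (hfiber : ∀ s : Finset (Fin n),
      (Finset.univ.filter (fun Δ => D Δ = s)).card ≤ 20 * t)
    (hI : ∀ Δ, (n : ℝ) / 2 ≤ (I Δ : ℝ)) :
    ∑ Δ : Bad, (r / n) ^ (D Δ).card * (1 - r / n) ^ (I Δ)
      ≤ 80 * t * r ^ 4 * Real.exp (-r / 2) := by
  have hn : (0 : ℝ) < n := by linarith
  have hmiss : ∀ Δ, (1 - r / n) ^ I Δ ≤ exp (-r / 2) := fun Δ =>
    calc (1 - r / n) ^ I Δ ≤ exp (-(r / n * I Δ)) :=
          one_sub_pow_le_exp_neg_mul ((div_le_one hn).2 hrn) _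
      _ ≤ exp (-r / 2) := by
          have : r / 2 ≤ r / n * I Δ :=
            calc r / 2 = r / n * (n / 2) := by field_simp
              _ ≤ r / n * I Δ := by gcongr; exact hI Δ
          gcongr; linarith
  have hhit := sum_div_pow_card_le D (20 * t) hfiber hD1 hD4 hr
  rw [Fintype.card_fin] at hhit
  calc ∑ Δ, (r / n) ^ (D Δ).card * (1 - r / n) ^ I Δ
      ≤ ∑ Δ, (r / n) ^ (D Δ).card * exp (-r / 2) := by gcongr with Δ; exact hmiss Δ
    _ = (∑ Δ, (r / n) ^ (D Δ).card) * exp (-r / 2) := (sum_mul ..).symm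
    _ ≤ 80 * t * r ^ 4 * exp (-r / 2) := by gcongr; push_cast at hhit; linarith

/-- Expected number of bad trapezoids appearing in the vertical decomposition of a
random sample.  `Bad` is an abstract finite index set of bad trapezoids; `D Δ` is the
set of (at most 4, at least 1) defining curves of `Δ`, at most `20t` trapezoids share any
given defining set, and `I Δ ≥ n/2` counts the curves crossing the interior of `Δ`.
Each curve is sampled with probability `p = r/n`, so `Δ` appears with probability
`p^{|D Δ|} (1-p)^{I Δ}`.  Then `E[X] ≤ 80 t r⁴ e^{-r/2}`. -/
theorem stmt_4 (n t : ℕ) (hn : 2 ≤ n) (ht : 2 ≤ t) (r : ℝ) (hr : 1 ≤ r) (hrn : r ≤ n)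
    (Bad : Type) [Fintype Bad]
    (D : Bad → Finset (Fin n)) (I : Bad → ℕ)
    (hD1 : ∀ Δ, 1 ≤ (D Δ).card) (hD4 : ∀ Δ, (D Δ).card ≤ 4)
    (hfiber : ∀ s : Finset (Fin n),
      (Finset.univ.filter (fun Δ => D Δ = s)).card ≤ 20 * t)
    (hI : ∀ Δ, (n : ℝ) / 2 ≤ (I Δ : ℝ)) :
    ∑ Δ : Bad, (r / n) ^ (D Δ).card * (1 - r / n) ^ (I Δ)
      ≤ 80 * t * r ^ 4 * Real.exp (-r / 2) :=
  stmt_4_general n t r hr hrn Bad D I hD1 hD4 hfiber hI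
end

section
/- There is a constant c' > 0 (sufficiently large) such that for all reals n ≥ 4, k ≥ 2 and a ≥ c'·log k one has (1 − log(3/2)/log n)^{a} ≤ 1 − 1/log² n, and consequently n(log n)^{a}·(1 − log(3/2)/log n)^{a}/(1 − 1/log² n) ≤ n(log n)^{a}. -/
open Real in
private lemma stmt_11_aux (n : ℝ) (hn : 4 ≤ n) :
    (1 : ℝ) / 3 ≤ log (3 / 2) ∧ log (3 / 2) ≤ 1 / 2 ∧
    1.386 < log n := by
  have h1 : log (2 / 3 : ℝ) ≤ 2 / 3 - 1 := Real.log_le_sub_one_of_pos (by norm_num)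
  have h2 : log (3 / 2 : ℝ) ≤ 3 / 2 - 1 := Real.log_le_sub_one_of_pos (by norm_num)
  have h3 : log ((3 : ℝ) / 2) = - log (2 / 3) := by
    rw [show ((3 : ℝ) / 2) = (2 / 3)⁻¹ by norm_num, Real.log_inv]
  have h4 : log 4 ≤ log n := Real.log_le_log (by norm_num) hn
  have h5 : log (4 : ℝ) = 2 * log 2 := by
    rw [show (4 : ℝ) = 2 ^ 2 by norm_num, Real.log_pow]; ring
  have h6 := Real.log_two_gt_d9
  refine ⟨by linarith, by linarith, by nlinarith⟩

private lemma stmt_11_key (a c L : ℝ) (hc1 : 1 / 3 ≤ c) (hc2 : c ≤ 1 / 2)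
    (hL : 1.386 < L) (ha : 6.9 ≤ a) :
    (1 - c / L) ^ a ≤ 1 - 1 / L ^ 2 := by
  have hL0 : (0 : ℝ) < L := by linarith
  have ht0 : 0 < c / L := div_pos (by linarith) hL0
  have ht1 : c / L < 1 := by rw [div_lt_one hL0]; linarith
  have hbase : (0 : ℝ) < 1 - c / L := by linarith
  have hat : (0 : ℝ) < a * (c / L) := by positivity
  have step1 : (1 - c / L) ^ a ≤ Real.exp (-(a * (c / L))) := by
    rw [Real.rpow_def_of_pos hbase]
    apply Real.exp_le_exp.mpr
    have hlog : Real.log (1 - c / L) ≤ -(c / L) := by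
      have := Real.log_le_sub_one_of_pos hbase; linarith
    nlinarith
  have step2 : Real.exp (-(a * (c / L))) ≤ 1 / (1 + a * (c / L)) := by
    rw [Real.exp_neg, inv_eq_one_div]
    apply one_div_le_one_div_of_le (by linarith)
    have := Real.add_one_le_exp (a * (c / L))
    linarith
  have step3 : 1 / (1 + a * (c / L)) ≤ 1 - 1 / L ^ 2 := by
    have huL : a * (c / L) * L = a * c := by field_simp
    have h2 : 2.3 ≤ a * (c / L) * L := by
      rw [huL]
      nlinarith
    have hsq : (0 : ℝ) ≤ L ^ 2 - 1 := by nlinarith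
    have h4 : L ≤ 2.3 * (L ^ 2 - 1) := by nlinarith [sq_nonneg (L - 1.386)]
    have h3 : 2.3 * (L ^ 2 - 1) ≤ a * (c / L) * L * (L ^ 2 - 1) :=
      mul_le_mul_of_nonneg_right h2 hsq
    have h5 : 1 ≤ a * (c / L) * (L ^ 2 - 1) := by nlinarith
    rw [div_le_iff₀ (by linarith)]
    have hkey : (1 - 1 / L ^ 2) * (1 + a * (c / L)) - 1
        = (a * (c / L) * (L ^ 2 - 1) - 1) / L ^ 2 := by
      field_simp
      ring
    have hnn : (0 : ℝ) ≤ (a * (c / L) * (L ^ 2 - 1) - 1) / L ^ 2 :=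
      div_nonneg (by linarith) (by positivity)
    linarith
  calc (1 - c / L) ^ a ≤ Real.exp (-(a * (c / L))) := step1
    _ ≤ 1 / (1 + a * (c / L)) := step2
    _ ≤ 1 - 1 / L ^ 2 := step3

open Real in
/-- Final analytic step of the induction in Theorem 8.  (i) If
`(1 - log(3/2)/log n)^a ≤ 1 - 1/log² n`, then dividing through is harmless:
`n (log n)^a (1 - log(3/2)/log n)^a / (1 - 1/log² n) ≤ n (log n)^a`.
(ii) For `a ≥ c' log k` with `c'` sufficiently large, `n ≥ 4`, `k ≥ 2`,
`(1 - log(3/2)/log n)^a ≤ 1 - 1/log² n`. -/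
theorem stmt_11 :
    (∀ a n : ℝ, 1 ≤ a → 4 ≤ n →
      (1 - log (3 / 2) / log n) ^ a ≤ 1 - 1 / (log n) ^ 2 →
      n * (log n) ^ a * (1 - log (3 / 2) / log n) ^ a / (1 - 1 / (log n) ^ 2)
        ≤ n * (log n) ^ a) ∧
    (∃ c' : ℝ, 1 ≤ c' ∧
      ∀ a k n : ℝ, 2 ≤ k → 4 ≤ n → c' * log k ≤ a →
        (1 - log (3 / 2) / log n) ^ a ≤ 1 - 1 / (log n) ^ 2) := by
  constructor
  · intro a n ha hn hX
    obtain ⟨hc1, hc2, hL⟩ := stmt_11_aux n hn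
    have hD : (0 : ℝ) < 1 - 1 / (log n) ^ 2 := by
      rw [sub_pos, div_lt_one (by nlinarith)]; nlinarith
    have hP : (0 : ℝ) ≤ n * (log n) ^ a := by
      have : (0 : ℝ) ≤ (log n) ^ a := Real.rpow_nonneg (by linarith) a
      nlinarith
    rw [div_le_iff₀ hD]
    have hX0 : (0 : ℝ) ≤ (1 - log (3 / 2) / log n) ^ a := by
      apply Real.rpow_nonneg
      have ht : log (3 / 2) / log n < 1 := by
        rw [div_lt_one (by linarith)]; linarith
      linarith
    nlinarith [mul_le_mul_of_nonneg_left hX hP]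
  · refine ⟨10, by norm_num, ?_⟩
    intro a k n hk hn ha
    obtain ⟨hc1, hc2, hL⟩ := stmt_11_aux n hn
    have hlogk : log 2 ≤ log k := Real.log_le_log (by norm_num) hk
    have ha6 : (6.9 : ℝ) ≤ a := by
      have := Real.log_two_gt_d9; nlinarith
    exact stmt_11_key a (log (3 / 2)) (log n) hc1 hc2 hL ha6
end
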